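/- Let p and q be coprime polynomials in d variables such that the identity q(z)·conj(q(1/z̄)) = p(z)·conj(p(1/z̄)) holds for all z ∈ 𝕋^d. Then there exists a polynomial u with |u(z)| = 1 for all z ∈ 𝕋^d such that u(z)q(z) = z^τ · conj(p(1/z̄)), where τ is the componentwise maximum of the multidegrees of p and q. -/

import Mathlib

/-!
Write `f̃ = z^τ · conj (f (1/z̄))`, which is a polynomial once `τ` bounds the exponents of `f`. On
the torus `1/z̄ = z`, so `f · f̃ = z^τ |f|²` there; since the torus is a product of infinite sets, a
polynomial identity may be checked on it. Thus `q q̃ = p p̃` as polynomials, and coprimality forces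
`q ∣ p̃`, say `p̃ = q u`. Unimodularity of `u` comes from the same principle: `|u|²|q|² = |q|²` on
the torus makes `(u ũ - z^σ) · q q̃` vanish identically, and `q q̃ ≠ 0` in the domain of polynomials.
-/

open MvPolynomial ComplexConjugate

lemma infinite_setOf_norm_eq_one : {w : ℂ | ‖w‖ = 1}.Infinite := by
  have hsphere : {w : ℂ | ‖w‖ = 1} = Metric.sphere 0 1 := by ext; simp
  rw [hsphere]
  exact (isPreconnected_sphere (by simp [Complex.rank_real_complex]) 0 1).infinite_of_nontrivial
    ⟨1, by simp, -1, by simp, by norm_num⟩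

lemma inv_conj_eq_self_of_forall_norm_eq_one {σ : Type*} {z : σ → ℂ} (hz : ∀ i, ‖z i‖ = 1) :
    (fun i => (conj (z i))⁻¹) = z :=
  funext fun i => by rw [Complex.inv_eq_conj (by rw [Complex.norm_conj, hz i]), Complex.conj_conj]

lemma norm_prod_pow_eq_one {σ : Type*} [Fintype σ] {z : σ → ℂ} (hz : ∀ i, ‖z i‖ = 1)
    (τ : σ → ℕ) : ‖∏ i, z i ^ τ i‖ = 1 := by
  simp [norm_prod, hz]

lemma prod_pow_ne_zero_of_forall_norm_eq_one {σ : Type*} [Fintype σ] {z : σ → ℂ}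
    (hz : ∀ i, ‖z i‖ = 1) (τ : σ → ℕ) : ∏ i, z i ^ τ i ≠ 0 :=
  norm_ne_zero_iff.mp (by simp [norm_prod_pow_eq_one hz])

namespace MvPolynomial

variable {σ : Type*}

theorem eq_of_eval_eq_of_forall_norm_eq_one {f g : MvPolynomial σ ℂ}
    (h : ∀ z : σ → ℂ, (∀ i, ‖z i‖ = 1) → eval z f = eval z g) : f = g :=
  funext_set (fun _ => {w | ‖w‖ = 1}) (fun _ => infinite_setOf_norm_eq_one)
    fun z hz => h z fun i => hz i trivial

/-- The reflection `z^τ · conj (f (1/z̄))` of `f`; it is this polynomial when `τ` bounds the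
exponents of `f` (see `eval_conjReflect`). -/
noncomputable def conjReflect (τ : σ →₀ ℕ) (f : MvPolynomial σ ℂ) : MvPolynomial σ ℂ :=
  ∑ m ∈ f.support, monomial (τ - m) (conj (coeff m f))

variable [Fintype σ] {τ : σ →₀ ℕ} {f : MvPolynomial σ ℂ} {z : σ → ℂ}

theorem eval_conjReflect (hτ : ∀ m ∈ f.support, m ≤ τ) (hz : ∀ i, z i ≠ 0) :
    eval z (conjReflect τ f) = (∏ i, z i ^ τ i) * conj (eval (fun i => (conj (z i))⁻¹) f) := by
  rw [conjReflect, map_sum, eval_eq' _ f, map_sum, Finset.mul_sum]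
  refine Finset.sum_congr rfl fun m hm => ?_
  have hpow : ∏ i, z i ^ (τ - m) i = (∏ i, z i ^ τ i) * ∏ i, (z i)⁻¹ ^ m i := by
    rw [← Finset.prod_mul_distrib]
    refine Finset.prod_congr rfl fun i _ => ?_
    rw [Finsupp.tsub_apply, pow_sub₀ _ (hz i) (hτ m hm i), inv_pow]
  simp only [eval_monomial, Finsupp.prod_pow, hpow, map_mul, map_prod, map_pow, map_inv₀,
    Complex.conj_conj]
  ring

theorem eval_conjReflect_of_forall_norm_eq_one (hτ : ∀ m ∈ f.support, m ≤ τ)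
    (hz : ∀ i, ‖z i‖ = 1) : eval z (conjReflect τ f) = (∏ i, z i ^ τ i) * conj (eval z f) := by
  rw [eval_conjReflect hτ fun i h => by simpa [h] using hz i,
    inv_conj_eq_self_of_forall_norm_eq_one hz]

theorem eval_mul_conjReflect_of_forall_norm_eq_one (hτ : ∀ m ∈ f.support, m ≤ τ)
    (hz : ∀ i, ‖z i‖ = 1) :
    eval z (f * conjReflect τ f) = (∏ i, z i ^ τ i) * (‖eval z f‖ : ℂ) ^ 2 := by
  rw [map_mul, eval_conjReflect_of_forall_norm_eq_one hτ hz, mul_left_comm, Complex.mul_conj']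

theorem mul_conjReflect_ne_zero (hf : f ≠ 0) (hτ : ∀ m ∈ f.support, m ≤ τ) :
    f * conjReflect τ f ≠ 0 := by
  refine fun h => hf (eq_of_eval_eq_of_forall_norm_eq_one fun z hz => ?_)
  have hz0 := congrArg (eval z) h
  rw [eval_mul_conjReflect_of_forall_norm_eq_one hτ hz, map_zero,
    mul_eq_zero_iff_left (prod_pow_ne_zero_of_forall_norm_eq_one hz _)] at hz0
  simpa using hz0

theorem norm_eval_eq_one_of_norm_mul_eq {u g : MvPolynomial σ ℂ} (hg : g ≠ 0)
    (h : ∀ z : σ → ℂ, (∀ i, ‖z i‖ = 1) → ‖eval z u‖ * ‖eval z g‖ = ‖eval z g‖)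
    (z : σ → ℂ) (hz : ∀ i, ‖z i‖ = 1) : ‖eval z u‖ = 1 := by
  classical
  set α := u.support.sup id
  set β := g.support.sup id
  have hα : ∀ m ∈ u.support, m ≤ α := fun m hm => Finset.le_sup (f := id) hm
  have hβ : ∀ m ∈ g.support, m ≤ β := fun m hm => Finset.le_sup (f := id) hm
  have hprod : (u * conjReflect α u - monomial α 1) * (g * conjReflect β g) = 0 :=
    eq_of_eval_eq_of_forall_norm_eq_one fun w hw => by
      have hw' := congrArg (fun x : ℝ => (x : ℂ) ^ 2) (h w hw)
      simp only [Complex.ofReal_mul, mul_pow] at hw'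
      rw [map_mul, map_sub, eval_mul_conjReflect_of_forall_norm_eq_one hα hw,
        eval_mul_conjReflect_of_forall_norm_eq_one hβ hw, eval_monomial, Finsupp.prod_pow,
        map_zero]
      linear_combination (∏ i, w i ^ α i) * (∏ i, w i ^ β i) * hw'
  have hu : u * conjReflect α u = monomial α 1 :=
    sub_eq_zero.mp ((mul_eq_zero.mp hprod).resolve_right (mul_conjReflect_ne_zero hg hβ))
  have hz' := congrArg (eval z) hu
  rw [eval_mul_conjReflect_of_forall_norm_eq_one hα hz, eval_monomial, Finsupp.prod_pow,
    one_mul] at hz'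
  have hsq : (‖eval z u‖ : ℂ) ^ 2 = 1 :=
    mul_left_cancel₀ (prod_pow_ne_zero_of_forall_norm_eq_one hz _) (hz'.trans (mul_one _).symm)
  exact_mod_cast (pow_eq_one_iff_of_nonneg (norm_nonneg _) two_ne_zero).mp (by exact_mod_cast hsq)

end MvPolynomial

/-- If `p` and `q` are coprime and `q(z)·conj(q(1/z̄)) = p(z)·conj(p(1/z̄))` on the torus, then
there is a polynomial `u` unimodular on the torus with `u(z)·q(z) = z^τ · conj (p(1/z̄))`, where
`τ` is the componentwise maximum of the multidegrees of `p` and `q`. -/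
theorem exists_unimodular_factor_of_torus_equality (d : ℕ) (p q : MvPolynomial (Fin d) ℂ)
    (hcoprime : ∀ r : MvPolynomial (Fin d) ℂ, r ∣ p → r ∣ q → IsUnit r)
    (htorus : ∀ z : Fin d → ℂ, (∀ i, ‖z i‖ = 1) →
      eval z q * (starRingEnd ℂ) (eval (fun i => ((starRingEnd ℂ) (z i))⁻¹) q) =
        eval z p * (starRingEnd ℂ) (eval (fun i => ((starRingEnd ℂ) (z i))⁻¹) p)) :
    ∃ u : MvPolynomial (Fin d) ℂ,
      (∀ z : Fin d → ℂ, (∀ i, ‖z i‖ = 1) → ‖eval z u‖ = 1) ∧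
      ∀ z : Fin d → ℂ, (∀ i, z i ≠ 0) →
        eval z u * eval z q =
          (∏ i, z i ^ max (p.degreeOf i) (q.degreeOf i)) *
            (starRingEnd ℂ) (eval (fun i => ((starRingEnd ℂ) (z i))⁻¹) p) := by
  set τ : Fin d →₀ ℕ := Finsupp.equivFunOnFinite.symm fun i => max (p.degreeOf i) (q.degreeOf i)
  have hpτ : ∀ m ∈ p.support, m ≤ τ := fun m hm i =>
    (degreeOf_le_iff.mp le_rfl m hm).trans (le_max_left _ _)
  have hqτ : ∀ m ∈ q.support, m ≤ τ := fun m hm i =>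
    (degreeOf_le_iff.mp le_rfl m hm).trans (le_max_right _ _)
  have hnorm : ∀ z : Fin d → ℂ, (∀ i, ‖z i‖ = 1) → ‖eval z q‖ = ‖eval z p‖ := fun z hz => by
    have h := htorus z hz
    rw [inv_conj_eq_self_of_forall_norm_eq_one hz, Complex.mul_conj', Complex.mul_conj'] at h
    exact (pow_left_inj₀ (norm_nonneg _) (norm_nonneg _) two_ne_zero).mp (by exact_mod_cast h)
  have hq : q ≠ 0 := fun hq => not_isUnit_zero <| hcoprime 0
    (zero_dvd_iff.mpr <| eq_of_eval_eq_of_forall_norm_eq_one fun z hz => by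
      simpa [hq] using (hnorm z hz).symm) (by rw [hq])
  have hident : q * conjReflect τ q = p * conjReflect τ p :=
    eq_of_eval_eq_of_forall_norm_eq_one fun z hz => by
      rw [eval_mul_conjReflect_of_forall_norm_eq_one hqτ hz,
        eval_mul_conjReflect_of_forall_norm_eq_one hpτ hz, hnorm z hz]
  obtain ⟨u, hu⟩ : q ∣ conjReflect τ p :=
    IsRelPrime.dvd_of_dvd_mul_left (fun r hrq hrp => hcoprime r hrp hrq) ⟨_, hident.symm⟩
  refine ⟨u, norm_eval_eq_one_of_norm_mul_eq hq fun z hz => ?_, fun z hz => ?_⟩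
  · rw [← norm_mul, mul_comm, ← map_mul, ← hu, eval_conjReflect_of_forall_norm_eq_one hpτ hz,
      norm_mul, norm_prod_pow_eq_one hz, one_mul, Complex.norm_conj, hnorm z hz]
  · rw [mul_comm, ← map_mul, ← hu, eval_conjReflect hpτ hz]
    rfl
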